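/- Let V ∈ ℝⁿ have strictly positive entries, let A be a real n × n matrix with xᵀ·A·x ≤ 0 for all x ∈ ℝⁿ, let B_pr be a real n × m matrix, B_c a real n × k matrix, and P_c ∈ ℝᵏ a constant vector. Let T̄ ∈ ℝⁿ and P̄ ∈ ℝᵐ satisfy the equilibrium relation 0 = A·T̄ + B_pr·P̄ − B_c·P_c. Suppose T : ℝ → ℝⁿ is differentiable and P : ℝ → ℝᵐ satisfies diag(V)·T′(t) = A·T(t) + B_pr·P(t) − B_c·P_c for all t. Then the storage function H(t) = ½·(T(t) − T̄)ᵀ·diag(V)·(T(t) − T̄) is differentiable and satisfies H′(t) ≤ (B_prᵀ·(T(t) − T̄))ᵀ·(P(t) − P̄) for all t, i.e. the thermal dynamics are shifted passive with input P and passive output B_prᵀ·(T − T̄). -/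

import Mathlib

/-!
Since `diag(V)` is symmetric, `Ḣ = (T - T̄)ᵀ diag(V) Ṫ`. Subtracting the equilibrium relation from
the dynamics gives `diag(V) Ṫ = A (T - T̄) + B_pr (P - P̄)`, so
`Ḣ = (T - T̄)ᵀ A (T - T̄) + (B_prᵀ (T - T̄))ᵀ (P - P̄)`, and the first term is `≤ 0`.
-/

open Matrix

section Derivatives

variable {𝕜 : Type*} [NontriviallyNormedField 𝕜] {ι κ : Type*} [Fintype ι]
  {f g : 𝕜 → ι → 𝕜} {f' g' : ι → 𝕜} {t : 𝕜}

theorem HasDerivAt.dotProduct (hf : HasDerivAt f f' t) (hg : HasDerivAt g g' t) :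
    HasDerivAt (fun s => f s ⬝ᵥ g s) (f' ⬝ᵥ g t + f t ⬝ᵥ g') t := by
  have hfg : ∀ i ∈ Finset.univ, HasDerivAt (fun s => f s i * g s i)
      (f' i * g t i + f t i * g' i) t := fun i _ =>
    (hasDerivAt_pi.mp hf i).mul (hasDerivAt_pi.mp hg i)
  rw [_root_.dotProduct, _root_.dotProduct, ← Finset.sum_add_distrib]
  exact HasDerivAt.fun_sum hfg

theorem HasDerivAt.mulVec (M : Matrix κ ι 𝕜) (hf : HasDerivAt f f' t) :
    HasDerivAt (fun s => M *ᵥ f s) (M *ᵥ f') t :=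
  hasDerivAt_pi.mpr fun i => by
    simpa [Matrix.mulVec] using (hasDerivAt_const t (M i)).dotProduct hf

theorem HasDerivAt.half_dotProduct_mulVec_self [CharZero 𝕜] {M : Matrix ι ι 𝕜} (hM : M.IsSymm)
    (hf : HasDerivAt f f' t) :
    HasDerivAt (fun s => (1 / 2 : 𝕜) * (f s ⬝ᵥ M *ᵥ f s)) (f t ⬝ᵥ M *ᵥ f') t := by
  have hsymm : f' ⬝ᵥ M *ᵥ f t = f t ⬝ᵥ M *ᵥ f' := by
    rw [dotProduct_mulVec, dotProduct_comm, ← mulVec_transpose, hM.eq]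
  refine ((hf.dotProduct (hf.mulVec M)).const_mul (1 / 2 : 𝕜)).congr_deriv ?_
  rw [hsymm]
  ring

end Derivatives

section SupplyRate

variable {R : Type*} [CommRing R] [PartialOrder R] [IsOrderedAddMonoid R]
  {n m : Type*} [Fintype n] [Fintype m]

theorem dotProduct_mulVec_add_mulVec_le {A : Matrix n n R} (hA : ∀ x, x ⬝ᵥ A *ᵥ x ≤ 0)
    (B : Matrix n m R) (x : n → R) (u : m → R) :
    x ⬝ᵥ (A *ᵥ x + B *ᵥ u) ≤ Bᵀ *ᵥ x ⬝ᵥ u := by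
  rw [dotProduct_add, dotProduct_mulVec x B, ← mulVec_transpose]
  simpa using add_le_add_right (hA x) (Bᵀ *ᵥ x ⬝ᵥ u)

theorem mulVec_add_mulVec_sub_eq_of_equilibrium {A : Matrix n n R} {B : Matrix n m R}
    {c x₀ : n → R} {u₀ : m → R} (heq : 0 = A *ᵥ x₀ + B *ᵥ u₀ - c) (x : n → R) (u : m → R) :
    A *ᵥ x + B *ᵥ u - c = A *ᵥ (x - x₀) + B *ᵥ (u - u₀) := by
  rw [mulVec_sub, mulVec_sub]
  linear_combination (norm := module) (-1 : R) • heq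

end SupplyRate

theorem thermal_dynamics_shifted_passive_general (n m k : ℕ)
    (V : Fin n → ℝ)
    (A : Matrix (Fin n) (Fin n) ℝ)
    (hA : ∀ x : Fin n → ℝ, x ⬝ᵥ A.mulVec x ≤ 0)
    (Bpr : Matrix (Fin n) (Fin m) ℝ) (Bc : Matrix (Fin n) (Fin k) ℝ)
    (Pc : Fin k → ℝ) (Tbar : Fin n → ℝ) (Pbar : Fin m → ℝ)
    (heq : (0 : Fin n → ℝ) = A.mulVec Tbar + Bpr.mulVec Pbar - Bc.mulVec Pc)
    (T T' : ℝ → Fin n → ℝ) (P : ℝ → Fin m → ℝ)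
    (hT : ∀ t, HasDerivAt T (T' t) t)
    (hdyn : ∀ t, (Matrix.diagonal V).mulVec (T' t) =
      A.mulVec (T t) + Bpr.mulVec (P t) - Bc.mulVec Pc) :
    ∀ t : ℝ,
      DifferentiableAt ℝ
        (fun s => (1 / 2 : ℝ) *
          ((T s - Tbar) ⬝ᵥ (Matrix.diagonal V).mulVec (T s - Tbar))) t ∧
      deriv (fun s => (1 / 2 : ℝ) *
          ((T s - Tbar) ⬝ᵥ (Matrix.diagonal V).mulVec (T s - Tbar))) t ≤
        (Bpr.transpose.mulVec (T t - Tbar)) ⬝ᵥ (P t - Pbar) := by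
  intro t
  have hH := ((hT t).sub_const Tbar).half_dotProduct_mulVec_self (isSymm_diagonal V)
  refine ⟨hH.differentiableAt, ?_⟩
  rw [hH.deriv, hdyn t, mulVec_add_mulVec_sub_eq_of_equilibrium heq]
  exact dotProduct_mulVec_add_mulVec_le hA Bpr _ _

/-- Theorem 4 of the paper (shifted passivity of the thermal dynamics): with
strictly positive volumes `V`, a negative-semidefinite coefficient matrix `A`,
constant consumer demand `P_c`, an equilibrium pair `(T̄, P̄)` of
`diag(V) Ṫ = A T + B_pr P − B_c P_c`, and a solution `T` with input `P`, the
shifted ectropy `H(t) = ½ (T t − T̄)ᵀ diag(V) (T t − T̄)` is differentiable and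
satisfies `H′(t) ≤ (B_prᵀ (T t − T̄))ᵀ (P t − P̄)`. -/
theorem thermal_dynamics_shifted_passive (n m k : ℕ)
    (V : Fin n → ℝ) (hV : ∀ i, 0 < V i)
    (A : Matrix (Fin n) (Fin n) ℝ)
    (hA : ∀ x : Fin n → ℝ, x ⬝ᵥ A.mulVec x ≤ 0)
    (Bpr : Matrix (Fin n) (Fin m) ℝ) (Bc : Matrix (Fin n) (Fin k) ℝ)
    (Pc : Fin k → ℝ) (Tbar : Fin n → ℝ) (Pbar : Fin m → ℝ)
    (heq : (0 : Fin n → ℝ) = A.mulVec Tbar + Bpr.mulVec Pbar - Bc.mulVec Pc)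
    (T T' : ℝ → Fin n → ℝ) (P : ℝ → Fin m → ℝ)
    (hT : ∀ t, HasDerivAt T (T' t) t)
    (hdyn : ∀ t, (Matrix.diagonal V).mulVec (T' t) =
      A.mulVec (T t) + Bpr.mulVec (P t) - Bc.mulVec Pc) :
    ∀ t : ℝ,
      DifferentiableAt ℝ
        (fun s => (1 / 2 : ℝ) *
          ((T s - Tbar) ⬝ᵥ (Matrix.diagonal V).mulVec (T s - Tbar))) t ∧
      deriv (fun s => (1 / 2 : ℝ) *
          ((T s - Tbar) ⬝ᵥ (Matrix.diagonal V).mulVec (T s - Tbar))) t ≤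
        (Bpr.transpose.mulVec (T t - Tbar)) ⬝ᵥ (P t - Pbar) :=
  thermal_dynamics_shifted_passive_general n m k V A hA Bpr Bc Pc Tbar Pbar heq T T' P hT hdyn
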